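/- Assume ‖W_i − A*_i‖ ≤ δ for all i, A* has unit-norm μ/√n-incoherent columns, x* is nonnegative with support S of size at most k and entries in [a,b], and i ∈ S. Set ε = 2m₁k(δ + μ/√n). If a ≥ (b + 2m₁)k(δ + μ/√n)/(1 − δ) and δ < 1, then ⟨W_i, A*x*⟩ − ε ≥ 0, i.e., the i-th ReLU unit with bias ε is active. -/

import Mathlib

open scoped RealInnerProductSpace

/-!
Since `Wᵢ` is `δ`-close to the unit vector `A*ᵢ`, the diagonal term satisfies
`⟪Wᵢ, A*ᵢ⟫ ≥ 1 - δ`, while every cross term obeys `|⟪Wᵢ, A*ⱼ⟫| ≤ δ + μ/√n`.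
Hence `⟪Wᵢ, A*x*⟫ ≥ a(1 - δ) - k b (δ + μ/√n)`, and the lower bound on `a` makes this
at least the bias `ε`.
-/

open Finset Set

section InnerProduct

variable {E : Type*} [NormedAddCommGroup E] [InnerProductSpace ℝ E]

theorem abs_inner_sub_le_of_norm_sub_le {w v u : E} {δ : ℝ} (hu : ‖u‖ = 1)
    (hw : ‖w - v‖ ≤ δ) : |⟪w - v, u⟫| ≤ δ :=
  calc |⟪w - v, u⟫| ≤ ‖w - v‖ * ‖u‖ := abs_real_inner_le_norm _ _
    _ ≤ δ := by rwa [hu, mul_one]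

theorem one_sub_le_inner_of_norm_sub_le {w v : E} {δ : ℝ} (hv : ‖v‖ = 1)
    (hw : ‖w - v‖ ≤ δ) : 1 - δ ≤ ⟪w, v⟫ := by
  have h := (abs_le.1 (abs_inner_sub_le_of_norm_sub_le hv hw)).1
  rw [inner_sub_left, real_inner_self_eq_norm_sq, hv] at h
  linarith

theorem abs_inner_le_add_of_norm_sub_le {w v u : E} {δ η : ℝ} (hu : ‖u‖ = 1)
    (hw : ‖w - v‖ ≤ δ) (hvu : |⟪v, u⟫| ≤ η) : |⟪w, u⟫| ≤ δ + η :=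
  calc |⟪w, u⟫| = |⟪w - v, u⟫ + ⟪v, u⟫| := by rw [inner_sub_left, sub_add_cancel]
    _ ≤ |⟪w - v, u⟫| + |⟪v, u⟫| := abs_add_le _ _
    _ ≤ δ + η := add_le_add (abs_inner_sub_le_of_norm_sub_le hu hw) hvu

end InnerProduct

section DominantDiagonal

variable {ι : Type*} {x g : ι → ℝ} {a b c d t : ℝ}

theorem neg_card_mul_le_sum_mul {T : Finset ι} (hx : ∀ j ∈ T, x j ∈ Icc 0 b)
    (hg : ∀ j ∈ T, |g j| ≤ c) : -(#T * (b * c)) ≤ ∑ j ∈ T, x j * g j := by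
  have hterm : ∀ j ∈ T, -(b * c) ≤ x j * g j := fun j hj => by
    obtain ⟨hx0, hxb⟩ := hx j hj
    have : |x j * g j| ≤ b * c := by
      rw [abs_mul, abs_of_nonneg hx0]
      exact mul_le_mul hxb (hg j hj) (abs_nonneg _) (hx0.trans hxb)
    exact (neg_le_neg this).trans (neg_abs_le _)
  simpa [nsmul_eq_mul] using card_nsmul_le_sum T _ _ hterm

theorem mul_le_sum_mul_of_diag_dominant [DecidableEq ι] {S : Finset ι} {i : ι} {k : ℕ}
    (hi : i ∈ S) (hcard : #S ≤ k) (ha : 0 ≤ a) (hx : ∀ j ∈ S, x j ∈ Icc a b)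
    (hd : 0 ≤ d) (hdiag : d ≤ g i) (hoff : ∀ j ∈ S, j ≠ i → |g j| ≤ c) (ht : 0 ≤ t)
    (hthr : (b + t) * k * c ≤ a * d) : t * k * c ≤ ∑ j ∈ S, x j * g j := by
  rw [← add_sum_erase S _ hi]
  have hxi : a * d ≤ x i * g i := mul_le_mul (hx i hi).1 hdiag hd (ha.trans (hx i hi).1)
  by_cases hc : 0 ≤ c
  · have hbc : 0 ≤ b * c := mul_nonneg (ha.trans ((hx i hi).1.trans (hx i hi).2)) hc
    have hrest := neg_card_mul_le_sum_mul (T := S.erase i) (g := g) (b := b) (c := c)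
      (fun j hj => ⟨ha.trans (hx j (mem_of_mem_erase hj)).1, (hx j (mem_of_mem_erase hj)).2⟩)
      (fun j hj => hoff j (mem_of_mem_erase hj) (ne_of_mem_erase hj))
    have hk : (#(S.erase i) : ℝ) * (b * c) ≤ k * (b * c) :=
      mul_le_mul_of_nonneg_right (by exact_mod_cast (card_erase_le).trans hcard) hbc
    linarith
  · -- a negative bound on `|g j|` leaves no off-diagonal index
    have hempty : S.erase i = ∅ := eq_empty_of_forall_notMem fun j hj =>
      hc ((abs_nonneg _).trans (hoff j (mem_of_mem_erase hj) (ne_of_mem_erase hj)))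
    have htkc : t * k * c ≤ 0 :=
      mul_nonpos_of_nonneg_of_nonpos (by positivity) (not_le.1 hc).le
    rw [hempty, sum_empty]
    nlinarith [mul_nonneg ha hd]

end DominantDiagonal

theorem stmt_7_general (n h : ℕ) (A : Fin h → EuclideanSpace ℝ (Fin n))
    (W : Fin h → EuclideanSpace ℝ (Fin n)) (μ δ a b m₁ : ℝ) (k : ℕ)
    (S : Finset (Fin h)) (x : Fin h → ℝ) (i : Fin h)
    (hnorm : ∀ l, ‖A l‖ = 1)
    (hincoh : ∀ l m : Fin h, l ≠ m → |⟪A l, A m⟫| ≤ μ / Real.sqrt n)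
    (hW : ∀ l, ‖W l - A l‖ ≤ δ)
    (hδ : δ < 1) (hm₁ : 0 < m₁) (ha0 : 0 ≤ a)
    (hcard : S.card ≤ k)
    (hx : ∀ j ∈ S, x j ∈ Set.Icc a b)
    (hi : i ∈ S)
    (haLB : a ≥ (b + 2*m₁) * k * (δ + μ / Real.sqrt n) / (1 - δ)) :
    ⟪W i, ∑ j ∈ S, x j • A j⟫ - 2*m₁*k*(δ + μ / Real.sqrt n) ≥ 0 := by
  have h1δ : 0 < 1 - δ := by linarith
  have hdiag : 1 - δ ≤ ⟪W i, A i⟫ := one_sub_le_inner_of_norm_sub_le (hnorm i) (hW i)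
  have hoff : ∀ j ∈ S, j ≠ i → |⟪W i, A j⟫| ≤ δ + μ / Real.sqrt n := fun j _ hj =>
    abs_inner_le_add_of_norm_sub_le (hnorm j) (hW i) (hincoh i j hj.symm)
  have hthr : (b + 2*m₁) * k * (δ + μ / Real.sqrt n) ≤ a * (1 - δ) :=
    (div_le_iff₀ h1δ).1 haLB
  have hsum := mul_le_sum_mul_of_diag_dominant hi hcard ha0 hx h1δ.le hdiag hoff
    (by positivity) hthr
  simp only [inner_sum, real_inner_smul_right]
  linarith

/-- with bias `ε = 2m₁k(δ + μ/√n)` and `a ≥ (b + 2m₁)k(δ + μ/√n)/(1 − δ)`,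
the `i`-th ReLU unit is active for `i` in the support: `⟪Wᵢ, A*x*⟫ − ε ≥ 0`. -/
theorem stmt_7 (n h : ℕ) (A : Fin h → EuclideanSpace ℝ (Fin n))
    (W : Fin h → EuclideanSpace ℝ (Fin n)) (μ δ a b m₁ : ℝ) (k : ℕ)
    (S : Finset (Fin h)) (x : Fin h → ℝ) (i : Fin h)
    (hnorm : ∀ l, ‖A l‖ = 1)
    (hincoh : ∀ l m : Fin h, l ≠ m → |⟪A l, A m⟫| ≤ μ / Real.sqrt n)
    (hW : ∀ l, ‖W l - A l‖ ≤ δ)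
    (hδ : δ < 1) (hm₁ : 0 < m₁) (ha0 : 0 ≤ a)
    (hcard : S.card ≤ k)
    (hx : ∀ j ∈ S, x j ∈ Set.Icc a b)
    (hsupp : ∀ j ∉ S, x j = 0)
    (hi : i ∈ S)
    (haLB : a ≥ (b + 2*m₁) * k * (δ + μ / Real.sqrt n) / (1 - δ)) :
    ⟪W i, ∑ j ∈ S, x j • A j⟫ - 2*m₁*k*(δ + μ / Real.sqrt n) ≥ 0 :=
  stmt_7_general n h A W μ δ a b m₁ k S x i hnorm hincoh hW hδ hm₁ ha0 hcard hx hi haLB
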